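/- Every 3-ASC graph has at least 7 vertices, and there exists a 3-ASC graph with exactly 7 vertices; that is, the minimum order of a 3-ASC graph equals 7. -/

import Mathlib

namespace AscPaper

open SimpleGraph

/-- The eccentricity of a vertex `u` in a graph `G`, as an extended natural number:
the supremum of distances from `u` to all vertices. -/
noncomputable def ecc {V : Type*} (G : SimpleGraph V) (u : V) : ℕ∞ :=
  ⨆ v, G.edist u v

/-- The radius of a graph: the minimum eccentricity over all vertices. -/
noncomputable def graphRadius {V : Type*} (G : SimpleGraph V) : ℕ∞ :=
  ⨅ u, ecc G u

/-- The diameter of a graph: the maximum eccentricity over all vertices. -/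
noncomputable def graphDiam {V : Type*} (G : SimpleGraph V) : ℕ∞ :=
  ⨆ u, ecc G u

/-- The eccentric set of `u`: all vertices at distance exactly `ecc G u` from `u`. -/
def eccSet {V : Type*} (G : SimpleGraph V) (u : V) : Set V :=
  {v | G.edist u v = ecc G u}

/-- `H` is an `r`-ASC (almost self-centered) graph: `H` is connected, has radius `r`,
and all but exactly two vertices are central (have eccentricity equal to the radius). -/
def IsASC {V : Type*} (r : ℕ) (H : SimpleGraph V) : Prop :=
  H.Connected ∧ graphRadius H = (r : ℕ∞) ∧
    {u : V | ecc H u ≠ graphRadius H}.ncard = 2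

/-- The `r`-ASC index of a graph `G`: the minimum number `k` of vertices that need to be
added to `G` so that the resulting graph is an `r`-ASC graph containing `G` as an
induced subgraph. -/
noncomputable def theta {V : Type*} (r : ℕ) (G : SimpleGraph V) : ℕ :=
  sInf {k : ℕ | ∃ H : SimpleGraph (V ⊕ Fin k), IsASC r H ∧
    ∀ u v : V, H.Adj (Sum.inl u) (Sum.inl v) ↔ G.Adj u v}

end AscPaper

/-!
Let `G` be 3-ASC with at most six vertices. A non-central vertex `a` has eccentricity at least 4,
so there is a geodesic `a b c d e` of length 4, and since every eccentricity is at least 3 there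
is a vertex `w` with `d(c, w) = 3`. These six distinct vertices are all of `G`. A neighbour of `w`
is at distance at least 2 from `c`, so it is `a` or `e`, and not both since `d(a, e) = 4`. Hence `w`
is a pendant vertex at one end `x` of the geodesic; with `y` the other end, `x`, `y` and `w` all
have eccentricity greater than 3, which is one non-central vertex too many.

The six-cycle with one pendant vertex is 3-ASC: only the pendant vertex and the vertex opposite
its attachment point have eccentricity 4.
-/

namespace SimpleGraph

variable {V : Type*} {G : SimpleGraph V} {a e u v w x y : V}

theorem Connected.exists_dist_eq_dist_eq_of_dist_eq_add (hG : G.Connected) {m n : ℕ}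
    (h : G.dist u v = m + n) : ∃ x, G.dist u x = m ∧ G.dist x v = n := by
  obtain ⟨p, hp⟩ := hG.exists_walk_length_eq_dist u v
  have hux := dist_le (p.take m)
  have hxv := dist_le (p.drop m)
  have := hG.dist_triangle (u := u) (v := p.getVert m) (w := v)
  simp only [Walk.take_length, Walk.drop_length] at hux hxv
  exact ⟨p.getVert m, by omega, by omega⟩

theorem Connected.exists_dist_eq_of_le_eccent (hG : G.Connected) {k : ℕ}
    (h : (k : ℕ∞) ≤ G.eccent u) : ∃ v, G.dist u v = k := by
  rcases k with _ | k
  · exact ⟨u, dist_self⟩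
  obtain ⟨v, hv⟩ := lt_iSup_iff.mp ((ENat.natCast_lt_natCast.mpr k.lt_succ_self).trans_le h)
  rw [← (hG u v).coe_dist_eq_edist, ENat.natCast_lt_natCast] at hv
  obtain ⟨x, hx, -⟩ := hG.exists_dist_eq_dist_eq_of_dist_eq_add (m := k + 1)
    (Nat.add_sub_of_le hv).symm
  exact ⟨x, hx⟩

theorem Connected.notMem_center_of_radius_lt_dist (hG : G.Connected)
    (h : G.radius < G.dist u v) : u ∉ G.center := fun hu =>
  (h.trans_le ((hG u v).coe_dist_eq_edist.trans_le edist_le_eccent)).ne' hu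

theorem Connected.dist_add_one_le_of_forall_adj_eq (hG : G.Connected)
    (hw : ∀ y, G.Adj w y → y = x) (hne : w ≠ v) : G.dist x v + 1 ≤ G.dist w v := by
  obtain ⟨p, hp⟩ := hG.exists_walk_length_eq_dist w v
  have hnil : ¬p.Nil := Walk.not_nil_of_ne hne
  have hsnd := hw _ (p.adj_snd hnil)
  have := dist_le p.tail
  rw [← p.length_tail_add_one hnil] at hp
  subst hsnd
  omega

theorem Connected.two_lt_ncard_compl_center [Finite V] (hG : G.Connected)
    (hx : G.radius < G.dist x v) (hwx : G.Adj w x) (hw : ∀ y, G.Adj w y → y = x) :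
    2 < G.centerᶜ.ncard := by
  have hwv : w ≠ v := by
    rintro rfl
    have := nontrivial_of_ne w x hwx.ne
    rw [dist_eq_one_iff_adj.mpr hwx.symm, Nat.cast_one, Order.lt_one_iff] at hx
    exact radius_ne_zero_of_nontrivial hx
  have hxw := hG.dist_add_one_le_of_forall_adj_eq hw hwv
  have hw_far : G.radius < G.dist w v :=
    hx.trans_le (by exact_mod_cast (by omega : G.dist x v ≤ G.dist w v))
  refine (Set.two_lt_ncard_iff).mpr ⟨x, v, w, hG.notMem_center_of_radius_lt_dist hx,
    hG.notMem_center_of_radius_lt_dist (dist_comm (u := w) ▸ hw_far),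
    hG.notMem_center_of_radius_lt_dist hw_far, ?_, hwx.ne.symm, hwv.symm⟩
  rintro rfl
  simp at hx

theorem Connected.adj_eq_or_eq_of_card_le_six [Fintype V] (hG : G.Connected)
    (hV : Fintype.card V ≤ 6) {c : V} (hac : G.dist a c = 2) (hce : G.dist c e = 2)
    (hae : G.dist a e = 4) (hcw : 3 ≤ G.dist c w) : ∀ y, G.Adj w y → y = a ∨ y = e := by
  obtain ⟨b, hab, hbc⟩ := hG.exists_dist_eq_dist_eq_of_dist_eq_add (m := 1) (n := 1) hac
  obtain ⟨d, hcd, hde⟩ := hG.exists_dist_eq_dist_eq_of_dist_eq_add (m := 1) (n := 1) hce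
  have had : G.dist a d = 3 := by
    have := hG.dist_triangle (u := a) (v := c) (w := d)
    have := hG.dist_triangle (u := a) (v := d) (w := e)
    omega
  have hcb : G.dist c b = 1 := dist_comm.trans hbc
  have hca : G.dist c a = 2 := dist_comm.trans hac
  have hgeod : [a, b, c, d, e].Nodup :=
    List.Nodup.of_map (G.dist a) (by simp [hab, hac, had, hae])
  have hw : w ∉ [a, b, c, d, e] := fun hw => by
    simp only [List.mem_cons, List.not_mem_nil, or_false] at hw
    rcases hw with rfl | rfl | rfl | rfl | rfl <;> simp [hca, hcb, hcd, hce] at hcw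
  have hmem (y : V) : y ∈ [w, a, b, c, d, e] := by_contra fun hy => by
    have := (List.nodup_cons.mpr ⟨hy, List.nodup_cons.mpr ⟨hw, hgeod⟩⟩).length_le_card
    simp only [List.length_cons, List.length_nil] at this
    omega
  intro y hy
  have hcy : 2 ≤ G.dist c y := by
    have := hG.dist_triangle (u := c) (v := y) (w := w)
    rw [dist_comm (u := y), dist_eq_one_iff_adj.mpr hy] at this
    omega
  simp only [List.mem_cons, List.not_mem_nil, or_false] at hmem
  rcases hmem y with rfl | rfl | rfl | rfl | rfl | rfl
  · exact (G.irrefl hy).elim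
  · exact .inl rfl
  · omega
  · simp at hcy
  · omega
  · exact .inr rfl

theorem Connected.exists_pendant_of_forall_adj_eq_or_eq (hG : G.Connected)
    (hae : 2 < G.dist a e) (hwy : G.Adj w y) (h : ∀ z, G.Adj w z → z = a ∨ z = e) :
    ∃ x x', G.dist x x' = G.dist a e ∧ G.Adj w x ∧ ∀ z, G.Adj w z → z = x := by
  have hnot : ¬(G.Adj w a ∧ G.Adj w e) := fun ⟨ha, he⟩ => by
    have := hG.dist_triangle (u := a) (v := w) (w := e)
    rw [dist_comm (u := a) (v := w), dist_eq_one_iff_adj.mpr ha,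
      dist_eq_one_iff_adj.mpr he] at this
    omega
  rcases h y hwy with rfl | rfl
  · exact ⟨y, e, rfl, hwy, fun z hz =>
      (h z hz).resolve_right fun hze => hnot ⟨hwy, hze ▸ hz⟩⟩
  · exact ⟨y, a, dist_comm, hwy, fun z hz =>
      (h z hz).resolve_left fun hza => hnot ⟨hza ▸ hz, hwy⟩⟩

theorem seven_le_card_of_radius_eq_three [Fintype V] (hG : G.Connected) (hr : G.radius = 3)
    (hc : G.centerᶜ.ncard = 2) : 7 ≤ Fintype.card V := by
  by_contra! hV
  obtain ⟨a, ha⟩ : G.centerᶜ.Nonempty := Set.nonempty_of_ncard_ne_zero (by omega)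
  have ha3 : G.radius < G.eccent a := lt_of_le_of_ne radius_le_eccent (Ne.symm ha)
  rw [hr] at ha3
  obtain ⟨e, hae⟩ := hG.exists_dist_eq_of_le_eccent (k := 4)
    (by exact_mod_cast Order.add_one_le_of_lt ha3)
  obtain ⟨c, hac, hce⟩ := hG.exists_dist_eq_dist_eq_of_dist_eq_add (m := 2) (n := 2) hae
  obtain ⟨w, hcw⟩ := hG.exists_dist_eq_of_le_eccent (u := c) (k := 3)
    (by rw [Nat.cast_ofNat, ← hr]; exact radius_le_eccent)
  obtain ⟨y, hwy⟩ := (hG w c).nonempty_neighborSet_left (by rintro rfl; simp at hcw)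
  obtain ⟨x, x', hxx', hwx, hw⟩ := hG.exists_pendant_of_forall_adj_eq_or_eq (by omega) hwy
    (hG.adj_eq_or_eq_of_card_le_six (by omega) hac hce hae hcw.ge)
  have := hG.two_lt_ncard_compl_center (v := x') (by rw [hr, hxx', hae]; decide) hwx hw
  omega

theorem le_edist_of_forall_adj_le_add_one (f : V → ℕ)
    (hf : ∀ a b, G.Adj a b → f b ≤ f a + 1) (hu : f u = 0) (v : V) :
    (f v : ℕ∞) ≤ G.edist u v := by
  suffices ∀ {a b} (p : G.Walk a b), f b ≤ f a + p.length by
    refine le_iInf fun p => ?_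
    have := this p
    rw [hu, zero_add] at this
    exact_mod_cast this
  intro a b p
  induction p with
  | nil => simp
  | cons hadj q ih =>
    have := hf _ _ hadj
    simp only [Walk.length_cons]
    omega

theorem edist_le_of_forall_exists_adj (f : V → ℕ)
    (hf : ∀ a, a ≠ u → ∃ b, G.Adj b a ∧ f b + 1 = f a) (v : V) : G.edist u v ≤ f v := by
  induction hn : f v generalizing v with
  | zero =>
    obtain rfl : v = u := by_contra fun hv => by obtain ⟨b, -, hb⟩ := hf v hv; omega
    simp
  | succ n ih =>
    obtain rfl | hv := eq_or_ne v u
    · simp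
    obtain ⟨b, hbv, hb⟩ := hf v hv
    calc G.edist u v ≤ G.edist u b + G.edist b v := G.edist_triangle
      _ ≤ n + 1 := add_le_add (ih b (by omega)) (edist_eq_one_iff_adj.mpr hbv).le
      _ = (n + 1 : ℕ) := by push_cast; rfl

end SimpleGraph

namespace AscPaper

open SimpleGraph

theorem isASC_iff {V : Type*} {r : ℕ} {H : SimpleGraph V} :
    IsASC r H ↔ H.Connected ∧ H.radius = r ∧ H.centerᶜ.ncard = 2 :=
  Iff.rfl

def hexPendant : SimpleGraph (Fin 7) :=
  fromRel fun a b => (a < 6 ∧ b.val = (a.val + 1) % 6) ∨ (a = 0 ∧ b = 6)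

instance : DecidableRel hexPendant.Adj := fun a b =>
  decidable_of_iff' _ (fromRel_adj _ a b)

def hexPendantDist : Fin 7 → Fin 7 → ℕ :=
  ![![0, 1, 2, 3, 2, 1, 1],
    ![1, 0, 1, 2, 3, 2, 2],
    ![2, 1, 0, 1, 2, 3, 3],
    ![3, 2, 1, 0, 1, 2, 4],
    ![2, 3, 2, 1, 0, 1, 3],
    ![1, 2, 3, 2, 1, 0, 2],
    ![1, 2, 3, 4, 3, 2, 0]]

theorem hexPendant_edist (u v : Fin 7) : hexPendant.edist u v = hexPendantDist u v :=
  le_antisymm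
    (edist_le_of_forall_exists_adj _
      ((by decide : ∀ u a, a ≠ u → ∃ b, hexPendant.Adj b a ∧
        hexPendantDist u b + 1 = hexPendantDist u a) u) v)
    (le_edist_of_forall_adj_le_add_one _
      ((by decide : ∀ u a b, hexPendant.Adj a b →
        hexPendantDist u b ≤ hexPendantDist u a + 1) u)
      ((by decide : ∀ u, hexPendantDist u u = 0) u) v)

theorem hexPendant_connected : hexPendant.Connected :=
  ⟨fun u v => reachable_of_edist_ne_top (by simp [hexPendant_edist])⟩

def hexPendantEccent : Fin 7 → ℕ := ![3, 3, 3, 4, 3, 3, 4]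

theorem hexPendant_eccent (u : Fin 7) : hexPendant.eccent u = hexPendantEccent u := by
  obtain ⟨v, hv⟩ := (by decide : ∀ u, ∃ v, hexPendantDist u v = hexPendantEccent u) u
  refine le_antisymm ((eccent_le_iff _ _).mpr fun w => ?_) ?_
  · rw [hexPendant_edist]
    exact_mod_cast (by decide : ∀ u w, hexPendantDist u w ≤ hexPendantEccent u) u w
  · rw [← hv, ← hexPendant_edist]
    exact edist_le_eccent

theorem hexPendant_radius : hexPendant.radius = 3 :=
  le_antisymm (radius_le_eccent.trans_eq (hexPendant_eccent 0))
    (le_iInf fun u => by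
      rw [hexPendant_eccent]
      exact_mod_cast (by decide : ∀ u, 3 ≤ hexPendantEccent u) u)

theorem hexPendant_compl_center : hexPendant.centerᶜ = {3, 6} := by
  ext u
  simp only [Set.mem_compl_iff, mem_center_iff, hexPendant_eccent, hexPendant_radius,
    Set.mem_insert_iff, Set.mem_singleton_iff]
  revert u
  decide

theorem isASC_three_hexPendant : IsASC 3 hexPendant :=
  isASC_iff.mpr ⟨hexPendant_connected, hexPendant_radius,
    hexPendant_compl_center ▸ Set.ncard_pair (by decide)⟩

/-- Every 3-ASC graph has at least 7 vertices, and there exists a 3-ASC graph with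
exactly 7 vertices: the minimum order of a 3-ASC graph equals 7. -/
theorem min_order_three_ASC :
    (∀ (V : Type) [Fintype V] (H : SimpleGraph V), IsASC 3 H → 7 ≤ Fintype.card V) ∧
    (∃ H : SimpleGraph (Fin 7), IsASC 3 H) :=
  ⟨fun _ _ _ hH => by
      obtain ⟨hG, hr, hc⟩ := isASC_iff.mp hH
      exact seven_le_card_of_radius_eq_three hG hr hc,
    ⟨hexPendant, isASC_three_hexPendant⟩⟩

end AscPaper
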